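/- Uniform pointwise estimate for weighted Bergman functions on the upper half-plane: for p ≥ 1 and ν > -1 there is a constant C such that every holomorphic F on ℂ₊ satisfies |F(z)| ≤ C (Im z)^{-(ν+2)/p} ‖F‖_{A^p_ν} for all z ∈ ℂ₊, where ‖F‖_{A^p_ν}^p = ∫_{ℂ₊} |F(w)|^p (Im w)^ν dA(w). -/

import Mathlib

/-!
By the mean value property on circles and integration in polar coordinates, `‖F c‖` is at most
the average of `‖F‖` over any disc centred at `c` on which `F` is holomorphic, and by Hölder's
inequality `‖F c‖ ^ p` is at most the average of `‖F‖ ^ p`. On the disc `B` of radius `Im z / 2`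
around `z` one has `Im z / 2 < Im w < 3 Im z / 2`, so the weight `(Im w) ^ ν` is at least
`min ((1 / 2) ^ ν) ((3 / 2) ^ ν) * (Im z) ^ ν` there. Since `|B| = π (Im z) ^ 2 / 4`, this gives
`‖F z‖ ^ p ≤ C ^ p (Im z) ^ (-(ν + 2)) ∫_{Im w > 0} ‖F w‖ ^ p (Im w) ^ ν dA(w)`.
-/

open MeasureTheory Complex ENNReal Metric Set Real

theorem circleMap_mem_ball_iff {c : ℂ} {ρ r θ : ℝ} : circleMap c ρ θ ∈ ball c r ↔ |ρ| < r := by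
  simp [dist_eq_norm]

theorem add_polarCoord_symm_eq_circleMap (c : ℂ) (q : ℝ × ℝ) :
    c + Complex.polarCoord.symm q = circleMap c q.1 q.2 := by
  simp [circleMap, Complex.exp_mul_I, ← Complex.ofReal_cos, ← Complex.ofReal_sin]

theorem setLIntegral_ball_eq_setLIntegral_circleMap {g : ℂ → ℝ≥0∞} {c : ℂ} {r : ℝ}
    (hg : ContinuousOn g (ball c r)) :
    ∫⁻ z in ball c r, g z =
      ∫⁻ ρ in Ioo 0 r, ∫⁻ θ in Ioo (-π) π, ENNReal.ofReal ρ * g (circleMap c ρ θ) := by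
  set S := Ioo 0 r ×ˢ Ioo (-π) π
  have hmeas : AEMeasurable (fun q : ℝ × ℝ ↦ ENNReal.ofReal q.1 * g (circleMap c q.1 q.2))
      ((volume.prod volume).restrict S) := by
    refine measurable_fst.ennreal_ofReal.aemeasurable.mul ?_
    refine (hg.comp (by fun_prop) ?_).aemeasurable (measurableSet_Ioo.prod measurableSet_Ioo)
    rintro ⟨ρ, θ⟩ ⟨hρ, -⟩
    exact circleMap_mem_ball_iff.2 ((abs_of_pos hρ.1).trans_lt hρ.2)
  have hS : (Iio r ×ˢ univ) ∩ Complex.polarCoord.target = S := by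
    rw [Complex.polarCoord_target, prod_inter_prod, univ_inter, Iio_inter_Ioi]
  calc ∫⁻ z in ball c r, g z = ∫⁻ z, (ball c r).indicator g (c + z) := by
        rw [lintegral_add_left_eq_self, lintegral_indicator measurableSet_ball]
    _ = ∫⁻ q in Complex.polarCoord.target,
          ENNReal.ofReal q.1 • (ball c r).indicator g (c + Complex.polarCoord.symm q) :=
        (Complex.lintegral_comp_polarCoord_symm _).symm
    _ = ∫⁻ q in Complex.polarCoord.target, (Iio r ×ˢ univ).indicator
          (fun q ↦ ENNReal.ofReal q.1 * g (circleMap c q.1 q.2)) q := by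
        refine setLIntegral_congr_fun Complex.polarCoord.open_target.measurableSet fun q hq ↦ ?_
        have hρ : 0 < q.1 := hq.1
        have hmem : circleMap c q.1 q.2 ∈ ball c r ↔ q.1 < r := by
          rw [circleMap_mem_ball_iff, abs_of_pos hρ]
        rw [add_polarCoord_symm_eq_circleMap, smul_eq_mul]
        by_cases hr : q.1 < r
        · rw [indicator_of_mem (hmem.2 hr),
            indicator_of_mem (show q ∈ Iio r ×ˢ univ from ⟨hr, trivial⟩)]
        · rw [indicator_of_notMem (mt hmem.1 hr), indicator_of_notMem (fun h ↦ hr h.1), mul_zero]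
    _ = ∫⁻ q in S, ENNReal.ofReal q.1 * g (circleMap c q.1 q.2) := by
        rw [setLIntegral_indicator (measurableSet_Iio.prod MeasurableSet.univ), hS]
    _ = _ := by rw [Measure.volume_eq_prod, setLIntegral_prod _ hmeas]

theorem min_rpow_mul_rpow_le_rpow {a b t s ν : ℝ} (ha : 0 < a) (ht : 0 < t) (has : a * t ≤ s)
    (hsb : s ≤ b * t) : min (a ^ ν) (b ^ ν) * t ^ ν ≤ s ^ ν := by
  have hb : 0 < b := pos_of_mul_pos_left ((mul_pos ha ht).trans_le (has.trans hsb)) ht.le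
  rcases le_or_gt 0 ν with hν | hν
  · calc min (a ^ ν) (b ^ ν) * t ^ ν ≤ a ^ ν * t ^ ν := by gcongr; exact min_le_left _ _
      _ = (a * t) ^ ν := (mul_rpow ha.le ht.le).symm
      _ ≤ s ^ ν := rpow_le_rpow (by positivity) has hν
  · calc min (a ^ ν) (b ^ ν) * t ^ ν ≤ b ^ ν * t ^ ν := by gcongr; exact min_le_right _ _
      _ = (b * t) ^ ν := (mul_rpow hb.le ht.le).symm
      _ ≤ s ^ ν := rpow_le_rpow_of_nonpos (by nlinarith) hsb hν.le

theorem abs_im_sub_lt_of_mem_ball {z w : ℂ} {r : ℝ} (hw : w ∈ ball z r) : |w.im - z.im| < r := by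
  rw [← sub_im]
  exact (abs_im_le_norm _).trans_lt (by rwa [← dist_eq_norm])

theorem ofReal_mul_setLIntegral_ball_le_weighted_setLIntegral {E : Type*}
    [NormedAddCommGroup E] {F : ℂ → E} {z : ℂ} (hz : 0 < z.im) {p : ℝ} (hp : 0 ≤ p) (ν : ℝ) :
    ENNReal.ofReal (min ((1 / 2) ^ ν) ((3 / 2) ^ ν) * z.im ^ ν) *
        ∫⁻ w in ball z (z.im / 2), ‖F w‖ₑ ^ p ≤
      ∫⁻ w in {w : ℂ | 0 < w.im}, ENNReal.ofReal (‖F w‖ ^ p * w.im ^ ν) := by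
  have him : ∀ w ∈ ball z (z.im / 2), z.im / 2 < w.im ∧ w.im < 3 / 2 * z.im := fun w hw ↦ by
    have := abs_lt.1 (abs_im_sub_lt_of_mem_ball hw)
    constructor <;> linarith
  rw [← lintegral_const_mul' _ _ ofReal_ne_top]
  calc ∫⁻ w in ball z (z.im / 2), ENNReal.ofReal (min ((1 / 2) ^ ν) ((3 / 2) ^ ν) * z.im ^ ν) *
        ‖F w‖ₑ ^ p ≤ ∫⁻ w in ball z (z.im / 2), ENNReal.ofReal (‖F w‖ ^ p * w.im ^ ν) := by
        refine setLIntegral_mono' measurableSet_ball fun w hw ↦ ?_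
        have hweight := min_rpow_mul_rpow_le_rpow (a := 1 / 2) (b := 3 / 2) (ν := ν)
          (by norm_num) hz (by linarith [him w hw]) (him w hw).2.le
        rw [← ofReal_norm, ofReal_rpow_of_nonneg (norm_nonneg _) hp,
          ← ENNReal.ofReal_mul (by positivity), mul_comm]
        gcongr
    _ ≤ ∫⁻ w in {w : ℂ | 0 < w.im}, ENNReal.ofReal (‖F w‖ ^ p * w.im ^ ν) :=
        lintegral_mono_set fun w hw ↦ (half_pos hz).trans (him w hw).1

section Holomorphic

variable {E : Type*} [NormedAddCommGroup E] [NormedSpace ℂ E] [CompleteSpace E]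

theorem ofReal_two_pi_mul_enorm_le_setLIntegral_enorm_circleMap {F : ℂ → E} {c : ℂ} {ρ : ℝ}
    (hF : DiffContOnCl ℂ F (ball c |ρ|)) :
    ENNReal.ofReal (2 * π) * ‖F c‖ₑ ≤ ∫⁻ θ in Ioo (-π) π, ‖F (circleMap c ρ θ)‖ₑ := by
  have hmean : (2 * π) • F c = ∫ θ in -π..π, F (circleMap c ρ θ) := by
    rw [← hF.circleAverage, circleAverage_eq_integral_add (-π),
      intervalIntegral.integral_comp_add_right (fun θ ↦ F (circleMap c ρ θ)),
      smul_inv_smul₀ (by positivity)]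
    ring_nf
  calc ENNReal.ofReal (2 * π) * ‖F c‖ₑ = ‖∫ θ in -π..π, F (circleMap c ρ θ)‖ₑ := by
        rw [← hmean, enorm_smul, Real.enorm_of_nonneg (by positivity)]
    _ ≤ ∫⁻ θ in Ioc (-π) π, ‖F (circleMap c ρ θ)‖ₑ := by
        rw [intervalIntegral.integral_of_le (by linarith [pi_pos])]
        exact enorm_integral_le_lintegral_enorm _
    _ = ∫⁻ θ in Ioo (-π) π, ‖F (circleMap c ρ θ)‖ₑ := setLIntegral_congr Ioo_ae_eq_Ioc.symm

theorem enorm_mul_volume_ball_le_setLIntegral_enorm {F : ℂ → E} {c : ℂ} {r : ℝ}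
    (hF : DifferentiableOn ℂ F (ball c r)) :
    ‖F c‖ₑ * volume (ball c r) ≤ ∫⁻ z in ball c r, ‖F z‖ₑ := by
  have hcircle : ∀ ρ ∈ Ioo 0 r, ∫⁻ θ in Ioo (-π) π, ENNReal.ofReal ρ * ‖F c‖ₑ ≤
      ∫⁻ θ in Ioo (-π) π, ENNReal.ofReal ρ * ‖F (circleMap c ρ θ)‖ₑ := by
    intro ρ hρ
    have hFρ : DiffContOnCl ℂ F (ball c |ρ|) :=
      hF.diffContOnCl_ball (closedBall_subset_ball ((abs_of_pos hρ.1).trans_lt hρ.2))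
    rw [lintegral_const_mul' _ _ ofReal_ne_top, lintegral_const_mul' _ _ ofReal_ne_top,
      setLIntegral_const, Real.volume_Ioo, sub_neg_eq_add, ← two_mul,
      mul_comm _ (ENNReal.ofReal _)]
    gcongr
    exact ofReal_two_pi_mul_enorm_le_setLIntegral_enorm_circleMap hFρ
  calc ‖F c‖ₑ * volume (ball c r) = ∫⁻ z in ball c r, ‖F c‖ₑ := by
        rw [setLIntegral_const, mul_comm]
    _ = ∫⁻ ρ in Ioo 0 r, ∫⁻ θ in Ioo (-π) π, ENNReal.ofReal ρ * ‖F c‖ₑ :=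
        setLIntegral_ball_eq_setLIntegral_circleMap continuousOn_const
    _ ≤ ∫⁻ ρ in Ioo 0 r, ∫⁻ θ in Ioo (-π) π, ENNReal.ofReal ρ * ‖F (circleMap c ρ θ)‖ₑ :=
        setLIntegral_mono' measurableSet_Ioo hcircle
    _ = ∫⁻ z in ball c r, ‖F z‖ₑ :=
        (setLIntegral_ball_eq_setLIntegral_circleMap hF.continuousOn.enorm).symm

theorem enorm_rpow_mul_volume_ball_le_setLIntegral_enorm_rpow {F : ℂ → E} {c : ℂ} {r p : ℝ}
    (hp : 1 ≤ p) (hF : DifferentiableOn ℂ F (ball c r)) :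
    ‖F c‖ₑ ^ p * volume (ball c r) ≤ ∫⁻ z in ball c r, ‖F z‖ₑ ^ p := by
  have hp0 : 0 < p := zero_lt_one.trans_le hp
  set V := volume (ball c r)
  rcases eq_or_ne V 0 with hV | hV
  · simp [hV]
  have hVtop : V ≠ ⊤ := measure_ball_lt_top.ne
  set μ := volume.restrict (ball c r)
  have hmean : ‖F c‖ₑ * V ≤ eLpNorm F 1 μ :=
    (enorm_mul_volume_ball_le_setLIntegral_enorm hF).trans_eq
      eLpNorm_one_eq_lintegral_enorm.symm
  have hHolder : eLpNorm F 1 μ ≤ eLpNorm F (ENNReal.ofReal p) μ * V ^ (1 - p⁻¹) := by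
    have := eLpNorm_le_eLpNorm_mul_rpow_measure_univ (μ := μ) (ENNReal.one_le_ofReal.2 hp)
      (hF.continuousOn.aestronglyMeasurable measurableSet_ball)
    rwa [Measure.restrict_apply_univ, toReal_one, toReal_ofReal hp0.le, div_one, one_div] at this
  have hLp : eLpNorm F (ENNReal.ofReal p) μ = (∫⁻ z in ball c r, ‖F z‖ₑ ^ p) ^ p⁻¹ := by
    rw [eLpNorm_eq_lintegral_rpow_enorm_toReal (by simpa using hp0) ofReal_ne_top,
      toReal_ofReal hp0.le, one_div]
  have hsplit : V = V ^ p⁻¹ * V ^ (1 - p⁻¹) := by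
    rw [← ENNReal.rpow_add _ _ hV hVtop, add_sub_cancel, ENNReal.rpow_one]
  have hroot : ‖F c‖ₑ * V ^ p⁻¹ ≤ (∫⁻ z in ball c r, ‖F z‖ₑ ^ p) ^ p⁻¹ := by
    rw [← ENNReal.mul_le_mul_iff_left (ENNReal.rpow_pos (pos_iff_ne_zero.2 hV) hVtop).ne'
      (ENNReal.rpow_ne_top_of_nonneg (sub_nonneg.2 (inv_le_one_of_one_le₀ hp)) hVtop),
      mul_assoc, ← hsplit, ← hLp]
    exact hmean.trans hHolder
  have := (ENNReal.le_rpow_inv_iff hp0).1 hroot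
  rwa [ENNReal.mul_rpow_of_nonneg _ _ hp0.le, ENNReal.rpow_inv_rpow hp0.ne'] at this

theorem enorm_rpow_mul_ofReal_le_weighted_setLIntegral {F : ℂ → E}
    (hF : DifferentiableOn ℂ F {z : ℂ | 0 < z.im}) {z : ℂ} (hz : 0 < z.im) {p : ℝ} (hp : 1 ≤ p)
    (ν : ℝ) :
    ‖F z‖ₑ ^ p * ENNReal.ofReal (π / 4 * min ((1 / 2) ^ ν) ((3 / 2) ^ ν) * z.im ^ (ν + 2)) ≤
      ∫⁻ w in {w : ℂ | 0 < w.im}, ENNReal.ofReal (‖F w‖ ^ p * w.im ^ ν) := by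
  set m := min ((1 / 2 : ℝ) ^ ν) ((3 / 2) ^ ν)
  have hsub : ball z (z.im / 2) ⊆ {w : ℂ | 0 < w.im} := fun w hw ↦ by
    show 0 < w.im
    linarith [(abs_lt.1 (abs_im_sub_lt_of_mem_ball hw)).1]
  have hvol : ENNReal.ofReal (m * z.im ^ ν) * volume (ball z (z.im / 2)) =
      ENNReal.ofReal (π / 4 * m * z.im ^ (ν + 2)) := by
    rw [Complex.volume_ball, ← ENNReal.ofReal_pow (by positivity), ← ofReal_coe_nnreal,
      NNReal.coe_real_pi, ← ENNReal.ofReal_mul (by positivity),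
      ← ENNReal.ofReal_mul (by positivity), rpow_add hz, Real.rpow_two]
    ring_nf
  calc ‖F z‖ₑ ^ p * ENNReal.ofReal (π / 4 * m * z.im ^ (ν + 2))
      = ENNReal.ofReal (m * z.im ^ ν) * (‖F z‖ₑ ^ p * volume (ball z (z.im / 2))) := by
        rw [← hvol]; ring
    _ ≤ ENNReal.ofReal (m * z.im ^ ν) * ∫⁻ w in ball z (z.im / 2), ‖F w‖ₑ ^ p := by
        gcongr
        exact enorm_rpow_mul_volume_ball_le_setLIntegral_enorm_rpow hp (hF.mono hsub)
    _ ≤ _ := ofReal_mul_setLIntegral_ball_le_weighted_setLIntegral hz (by linarith) ν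

end Holomorphic

theorem ENNReal.le_ofReal_rpow_neg_mul_rpow_of_rpow_mul_le {x A : ℝ≥0∞} {κ p : ℝ} (hκ : 0 < κ)
    (hp : 0 < p) (h : x ^ p * ENNReal.ofReal κ ≤ A) :
    x ≤ ENNReal.ofReal (κ ^ (-(1 / p))) * A ^ (1 / p) := by
  have hx : x ^ p ≤ ENNReal.ofReal κ⁻¹ * A := by
    rw [ofReal_inv_of_pos hκ, ← ENNReal.mul_le_iff_le_inv (by simpa using hκ) ofReal_ne_top,
      mul_comm]
    exact h
  calc x ≤ (ENNReal.ofReal κ⁻¹ * A) ^ (1 / p) := by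
        rw [one_div, ENNReal.le_rpow_inv_iff hp]; exact hx
    _ = ENNReal.ofReal (κ ^ (-(1 / p))) * A ^ (1 / p) := by
        rw [ENNReal.mul_rpow_of_nonneg _ _ (by positivity), ofReal_rpow_of_pos (by positivity),
          Real.inv_rpow hκ.le, ← Real.rpow_neg hκ.le]

theorem bergman_pointwise_estimate_general (p ν : ℝ) (hp : 1 ≤ p) :
    ∃ C : ℝ, 0 < C ∧ ∀ F : ℂ → ℂ, DifferentiableOn ℂ F {z : ℂ | 0 < z.im} →
      ∀ z : ℂ, 0 < z.im →
        ENNReal.ofReal (‖F z‖) ≤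
          ENNReal.ofReal (C * z.im ^ (-(ν + 2) / p)) *
            (∫⁻ w in {w : ℂ | 0 < w.im},
              ENNReal.ofReal (‖F w‖ ^ p * w.im ^ ν)) ^ (1 / p) := by
  set m := min ((1 / 2 : ℝ) ^ ν) ((3 / 2) ^ ν)
  refine ⟨(π / 4 * m) ^ (-(1 / p)), by positivity, fun F hF z hz ↦ ?_⟩
  have hC : (π / 4 * m * z.im ^ (ν + 2)) ^ (-(1 / p)) =
      (π / 4 * m) ^ (-(1 / p)) * z.im ^ (-(ν + 2) / p) := by
    rw [mul_rpow (by positivity) (by positivity), ← rpow_mul hz.le]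
    ring_nf
  rw [ofReal_norm, ← hC]
  exact ENNReal.le_ofReal_rpow_neg_mul_rpow_of_rpow_mul_le (by positivity) (by linarith)
    (enorm_rpow_mul_ofReal_le_weighted_setLIntegral hF hz hp ν)

/-- Uniform pointwise estimate for weighted Bergman functions on the upper half-plane:
for `p ≥ 1`, `ν > -1` there is `C > 0` so that every holomorphic `F` on `ℂ₊` satisfies
`|F z| ≤ C (Im z)^{-(ν+2)/p} ‖F‖_{A^p_ν}` for all `z ∈ ℂ₊`. -/
theorem bergman_pointwise_estimate (p ν : ℝ) (hp : 1 ≤ p) (hν : -1 < ν) :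
    ∃ C : ℝ, 0 < C ∧ ∀ F : ℂ → ℂ, DifferentiableOn ℂ F {z : ℂ | 0 < z.im} →
      ∀ z : ℂ, 0 < z.im →
        ENNReal.ofReal (‖F z‖) ≤
          ENNReal.ofReal (C * z.im ^ (-(ν + 2) / p)) *
            (∫⁻ w in {w : ℂ | 0 < w.im},
              ENNReal.ofReal (‖F w‖ ^ p * w.im ^ ν)) ^ (1 / p) :=
  bergman_pointwise_estimate_general p ν hp
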